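/- Let k be a perfect field of characteristic p > 2, S a polynomial ring over k, and I a radical homogeneous ideal such that S/I is F-split. Then the Rees-like algebra RL(I) = S[It,t^2] is F-split. -/

import Mathlib

open Polynomial

/-- The Rees-like algebra `S[It, t²]`: the `S`-subalgebra of `S[t]` generated by
`{f·t : f ∈ I}` and `t²`. -/
noncomputable def ReesLike (S : Type*) [CommRing S] (I : Ideal S) : Subalgebra S (Polynomial S) :=
  Algebra.adjoin S ({p : Polynomial S | ∃ a ∈ I, p = Polynomial.C a * Polynomial.X} ∪
    {Polynomial.X ^ 2})

/-- A ring `A` of characteristic `p` is *F-split* if the Frobenius `A → A` splits as a map of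
`A`-modules, i.e. there is an additive map `φ : A → A` with `φ(1) = 1` and
`φ(aᵖ·b) = a·φ(b)` for all `a b : A`. -/
def IsFSplit (p : ℕ) (A : Type*) [CommRing A] : Prop :=
  ∃ φ : A →+ A, φ 1 = 1 ∧ ∀ a b : A, φ (a ^ p * b) = a * φ b

/-!
Because `k` is perfect, `S^{1/p}` is a free `S`-module on the monomials `x^{e/p}` with
all `eᵢ < p`, so an F-splitting `ψ` of `S/I` lifts to an F-splitting `φ` of `S` with `φ(I) ⊆ I`.
On `S[t]`, the map that applies `φ` to the coefficients of `t^{pm}` (sending them to `tᵐ`) and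
kills all other coefficients is again an F-splitting. Since `RL(I)` consists of the polynomials
whose odd-degree coefficients lie in `I`, and `p` is odd, this map preserves `RL(I)`.
-/

namespace Finsupp

variable {σ : Type*} (p : ℕ)

noncomputable def natDiv (d : σ →₀ ℕ) : σ →₀ ℕ := d.mapRange (· / p) (Nat.zero_div p)

noncomputable def natMod (d : σ →₀ ℕ) : σ →₀ ℕ := d.mapRange (· % p) (Nat.zero_mod p)

theorem smul_natDiv_add_natMod (d : σ →₀ ℕ) : p • natDiv p d + natMod p d = d := by
  ext i; simp [natDiv, natMod, Nat.div_add_mod]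

theorem natDiv_smul_add {p : ℕ} (hp : 0 < p) (a d : σ →₀ ℕ) :
    natDiv p (p • a + d) = a + natDiv p d := by
  ext i; simp [natDiv, Nat.add_mul_div_left _ _ hp, add_comm, mul_comm]

theorem natMod_smul_add (a d : σ →₀ ℕ) : natMod p (p • a + d) = natMod p d := by
  ext i; simp [natMod]

end Finsupp

namespace MvPolynomial

open Finsupp

variable {σ k : Type*} [CommRing k] (p : ℕ) [Fact p.Prime] [CharP k p] [PerfectRing k p]

/-- With `t e` a lift of `ψ(xᵉ)`, this is `c xᵈ ↦ c^{1/p} x^{⌊d/p⌋} t(d mod p)`: the `S`-linear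
extension of `ψ` along the basis `{x^{e/p} : eᵢ < p}` of the free `S`-module `S^{1/p}`. -/
noncomputable def liftSplitting (t : (σ →₀ ℕ) → MvPolynomial σ k) :
    MvPolynomial σ k →+ MvPolynomial σ k :=
  (Finsupp.liftAddHom fun d => (AddMonoidHom.mulRight (t (natMod p d))).comp
    ((monomial (natDiv p d)).toAddMonoidHom.comp (frobeniusEquiv k p).symm.toAddMonoidHom)).comp
    AddMonoidAlgebra.coeffAddEquiv.toAddMonoidHom

variable {p}

theorem liftSplitting_monomial (t : (σ →₀ ℕ) → MvPolynomial σ k) (d : σ →₀ ℕ) (c : k) :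
    liftSplitting p t (monomial d c) =
      monomial (natDiv p d) ((frobeniusEquiv k p).symm c) * t (natMod p d) :=
  Finsupp.liftAddHom_apply_single _ d c

theorem liftSplitting_pow_mul (t : (σ →₀ ℕ) → MvPolynomial σ k) (g f : MvPolynomial σ k) :
    liftSplitting p t (g ^ p * f) = g * liftSplitting p t f := by
  induction f using induction_on' with
  | add f₁ f₂ h₁ h₂ => rw [mul_add, map_add, map_add, h₁, h₂, mul_add]
  | monomial d b =>
    induction g using induction_on' with
    | add g₁ g₂ h₁ h₂ => rw [add_pow_char, add_mul, map_add, h₁, h₂, add_mul]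
    | monomial a c =>
      have hp : 0 < p := (Fact.out : p.Prime).pos
      rw [monomial_pow, monomial_mul, liftSplitting_monomial, liftSplitting_monomial,
        natDiv_smul_add hp, natMod_smul_add, map_mul, frobeniusEquiv_symm_pow, ← mul_assoc,
        monomial_mul]

theorem liftSplitting_one {t : (σ →₀ ℕ) → MvPolynomial σ k} (ht : t 0 = 1) :
    liftSplitting p t 1 = 1 := by
  rw [← C_1, ← monomial_zero', liftSplitting_monomial]
  simp [natDiv, natMod, ht]

theorem mk_liftSplitting {I : Ideal (MvPolynomial σ k)}
    {ψ : MvPolynomial σ k ⧸ I →+ MvPolynomial σ k ⧸ I} (hψ : ∀ a b, ψ (a ^ p * b) = a * ψ b)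
    {t : (σ →₀ ℕ) → MvPolynomial σ k}
    (ht : ∀ e, Ideal.Quotient.mk I (t e) = ψ (Ideal.Quotient.mk I (monomial e 1)))
    (f : MvPolynomial σ k) :
    Ideal.Quotient.mk I (liftSplitting p t f) = ψ (Ideal.Quotient.mk I f) := by
  induction f using induction_on' with
  | add f₁ f₂ h₁ h₂ => rw [map_add, map_add, h₁, h₂, map_add, map_add]
  | monomial d c =>
    rw [liftSplitting_monomial, map_mul, ht, ← hψ, ← map_pow, ← map_mul, monomial_pow,
      monomial_mul, frobeniusEquiv_symm_pow_p, mul_one, smul_natDiv_add_natMod]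

theorem exists_fSplitting_mapsTo_of_isFSplit_quotient {I : Ideal (MvPolynomial σ k)}
    (h : IsFSplit p (MvPolynomial σ k ⧸ I)) :
    ∃ φ : MvPolynomial σ k →+ MvPolynomial σ k,
      φ 1 = 1 ∧ (∀ a b, φ (a ^ p * b) = a * φ b) ∧ Set.MapsTo φ I I := by
  classical
  obtain ⟨ψ, hψ1, hψ⟩ := h
  choose s hs using fun e : σ →₀ ℕ =>
    Ideal.Quotient.mk_surjective (ψ (Ideal.Quotient.mk I (monomial e 1)))
  -- the lift is reset to `1` at `e = 0` so that `φ 1 = 1` holds exactly, not only modulo `I`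
  have ht : ∀ e, Ideal.Quotient.mk I (Function.update s 0 1 e) =
      ψ (Ideal.Quotient.mk I (monomial e 1)) := by
    intro e
    rcases eq_or_ne e 0 with rfl | he
    · simp [hψ1]
    · rw [Function.update_of_ne he, hs]
  refine ⟨liftSplitting p (Function.update s 0 1), liftSplitting_one (by simp),
    liftSplitting_pow_mul _, fun a (ha : a ∈ I) => ?_⟩
  rw [SetLike.mem_coe, ← Ideal.Quotient.eq_zero_iff_mem, mk_liftSplitting hψ ht,
    Ideal.Quotient.eq_zero_iff_mem.mpr ha, map_zero]

end MvPolynomial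

theorem Subalgebra.isFSplit_of_mapsTo {R A : Type*} [CommRing R] [CommRing A] [Algebra R A]
    {p : ℕ} {φ : A →+ A} (h1 : φ 1 = 1) (hφ : ∀ a b, φ (a ^ p * b) = a * φ b)
    (B : Subalgebra R A) (hB : Set.MapsTo φ B B) : IsFSplit p B :=
  ⟨{ toFun a := ⟨φ a, hB a.2⟩
     map_zero' := Subtype.ext φ.map_zero
     map_add' a b := Subtype.ext (φ.map_add a b) },
    Subtype.ext h1, fun a b => Subtype.ext (hφ a b)⟩

namespace Polynomial

section Contract

variable {R : Type*} [CommRing R] (p : ℕ) [Fact p.Prime]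

/-- Under `R[t]^{1/p} ≅ R^{1/p}[t^{1/p}]`, this is
`∑ aᵢ^{1/p} t^{i/p} ↦ ∑_{p ∣ i} φ(aᵢ^{1/p}) t^{i/p}`. -/
noncomputable def contractSplitting (φ : R →+ R) : R[X] →+ R[X] :=
  AddMonoidHom.mk' (fun f => ⟨(contract p f).toFinsupp.map φ⟩) fun f g => by
    rw [contract_add (Fact.out : p.Prime).ne_zero, toFinsupp_add, AddMonoidAlgebra.map_add,
      ofFinsupp_add]

variable {p}

@[simp]
theorem coeff_contractSplitting (φ : R →+ R) (f : R[X]) (m : ℕ) :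
    (contractSplitting p φ f).coeff m = φ (f.coeff (m * p)) := by
  simp [contractSplitting, toFinsupp_apply, coeff_contract (Fact.out : p.Prime).ne_zero]

theorem contractSplitting_one {φ : R →+ R} (hφ : φ 1 = 1) : contractSplitting p φ 1 = 1 := by
  ext m
  rcases eq_or_ne m 0 with rfl | hm
  · simp [hφ]
  · simp [coeff_one, hm, (Fact.out : p.Prime).ne_zero]

theorem contractSplitting_X_pow_mul (φ : R →+ R) (f : R[X]) :
    contractSplitting p φ (X ^ p * f) = X * contractSplitting p φ f := by
  ext m
  rcases m with _ | m
  · simp [(Fact.out : p.Prime).ne_zero.symm]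
  · simp [coeff_X_mul, coeff_X_pow_mul', add_mul]

variable [CharP R p]

theorem contractSplitting_pow_mul {φ : R →+ R} (hφ : ∀ a b, φ (a ^ p * b) = a * φ b)
    (g f : R[X]) : contractSplitting p φ (g ^ p * f) = g * contractSplitting p φ f := by
  induction g using Polynomial.induction_on generalizing f with
  | C a =>
    ext m
    rw [coeff_contractSplitting, ← C_pow, coeff_C_mul, hφ, coeff_C_mul, coeff_contractSplitting]
  | add g h ihg ihh => rw [add_pow_char, add_mul, map_add, ihg, ihh, add_mul]
  | monomial n a ih =>
    rw [pow_succ, ← mul_assoc, mul_pow, mul_assoc, ih, contractSplitting_X_pow_mul, ← mul_assoc]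

end Contract

section OddCoeff

variable {S : Type*} [CommRing S]

def oddCoeffSubalgebra (I : Ideal S) : Subalgebra S S[X] where
  carrier := {f | ∀ i, Odd i → f.coeff i ∈ I}
  mul_mem' {f g} hf hg i hi := by
    rw [coeff_mul]
    refine Ideal.sum_mem _ fun x hx => ?_
    rw [Finset.HasAntidiagonal.mem_antidiagonal] at hx
    subst hx
    rcases Nat.even_or_odd x.1 with h | h
    · exact I.mul_mem_left _ (hg _ ((Nat.odd_add'.mp hi).mpr h))
    · exact I.mul_mem_right _ (hf _ h)
  add_mem' hf hg i hi := by
    rw [coeff_add]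
    exact I.add_mem (hf i hi) (hg i hi)
  algebraMap_mem' r i hi := by
    rw [algebraMap_eq, coeff_C, if_neg hi.pos.ne']
    exact I.zero_mem

theorem reesLike_eq_oddCoeffSubalgebra (I : Ideal S) : ReesLike S I = oddCoeffSubalgebra I := by
  have hX2 : (X ^ 2 : S[X]) ∈ ReesLike S I := Algebra.subset_adjoin (Or.inr rfl)
  refine le_antisymm (Algebra.adjoin_le ?_) fun f hf => ?_
  · rintro _ (⟨a, ha, rfl⟩ | rfl) i hi
    · rw [coeff_C_mul_X]
      split_ifs
      exacts [ha, I.zero_mem]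
    · rw [coeff_X_pow, if_neg (by rintro rfl; exact Nat.not_odd_iff_even.mpr even_two hi)]
      exact I.zero_mem
  · rw [as_sum_range_C_mul_X_pow f]
    refine Subalgebra.sum_mem _ fun i _ => ?_
    obtain ⟨m, rfl | rfl⟩ := Nat.even_or_odd' i
    · rw [pow_mul]
      exact mul_mem (Subalgebra.algebraMap_mem _ _) (pow_mem hX2 m)
    · have hCX : C (f.coeff (2 * m + 1)) * X ∈ ReesLike S I :=
        Algebra.subset_adjoin (Or.inl ⟨_, hf _ (odd_two_mul_add_one m), rfl⟩)
      rw [pow_succ, pow_mul, mul_comm _ X, ← mul_assoc]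
      exact mul_mem hCX (pow_mem hX2 m)

end OddCoeff

end Polynomial

theorem reesLike_isFSplit_of_quotient_isFSplit_general
    (k : Type*) [Field k] (p : ℕ) [Fact p.Prime] [CharP k p] [PerfectRing k p] (hp : 2 < p)
    (n : ℕ) (I : Ideal (MvPolynomial (Fin n) k))
    (hsplit : IsFSplit p (MvPolynomial (Fin n) k ⧸ I)) :
    IsFSplit p (ReesLike (MvPolynomial (Fin n) k) I) := by
  obtain ⟨φ, hφ1, hφ, hφI⟩ := MvPolynomial.exists_fSplitting_mapsTo_of_isFSplit_quotient hsplit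
  have hodd : Odd p := (Fact.out : p.Prime).odd_of_ne_two hp.ne'
  rw [Polynomial.reesLike_eq_oddCoeffSubalgebra]
  refine Subalgebra.isFSplit_of_mapsTo (Polynomial.contractSplitting_one hφ1)
    (Polynomial.contractSplitting_pow_mul hφ) _ fun f hf i hi => ?_
  rw [Polynomial.coeff_contractSplitting]
  exact hφI (hf _ (hi.mul hodd))

/-- **Theorem (Fsplit, ⇒).** Let `k` be a perfect field of characteristic `p > 2`,
`S = k[x 1, …, x n]`, and `I` a radical homogeneous ideal such that `S/I` is F-split.
Then the Rees-like algebra `S[It, t²]` is F-split. -/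
theorem reesLike_isFSplit_of_quotient_isFSplit
    (k : Type*) [Field k] (p : ℕ) [Fact p.Prime] [CharP k p] [PerfectRing k p] (hp : 2 < p)
    (n : ℕ) (I : Ideal (MvPolynomial (Fin n) k))
    (hhom : ∀ q ∈ I, ∀ d : ℕ, MvPolynomial.homogeneousComponent d q ∈ I)
    (hrad : I.IsRadical)
    (hsplit : IsFSplit p (MvPolynomial (Fin n) k ⧸ I)) :
    IsFSplit p (ReesLike (MvPolynomial (Fin n) k) I) :=
  reesLike_isFSplit_of_quotient_isFSplit_general k p hp n I hsplit
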